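/- arXiv:2203.07297 — 4 statements merged into one kernel-verified Lean document; each statement's English description precedes it below -/
import Mathlib

section
/- For each fixed p ≥ 3, as n → ∞ the cardinality #𝕋_{n,p} is asymptotic to C(p) · n^{−5/2} · (256/27)^n, where C(p) = (2p−3)! / (3√(6π)(p−3)!(p−1)!) · (16/9)^{p−2}. -/
/-! Stirling's formula makes the exponential factors cancel in a binomial coefficient:
`((k + 1) n).choose n ∼ √((k + 1) / (2πkn)) · ((k + 1) ^ (k + 1) / k ^ k) ^ n`.
A factorial shifted by a fixed `a` gains the factor `m ^ a`, i.e. `(m + a)! ∼ m! · m ^ a`, so for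
`p ≥ 3` the closed formula is a constant times
`(4n + 2p - 5)! / (n! (3n + 2p - 3)!) ∼ (4n).choose n · (4n) ^ (2p - 5) / (3n) ^ (2p - 3)`,
and the powers of `n` combine to `n ^ (-1/2 - 2) = n ^ (-5/2)`. -/

open Nat Filter Real

/-- `#𝕋_{n,p}`: the number of simple triangulations of the `p`-gon with `n` inner
vertices, given by its closed formula, as a real number. -/
noncomputable def Tnp (n p : ℕ) : ℝ :=
  (2 * (2*p-3)! * (4*n+2*p-5)! : ℕ) / ((p-3)! * (p-1)! * n ! * (3*n+2*p-3)! : ℕ)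

/-- The constant `C(p)` in the asymptotic enumeration of simple triangulations of the `p`-gon. -/
noncomputable def Cp (p : ℕ) : ℝ :=
  ((2*p-3)! : ℝ) / (3 * Real.sqrt (6*Real.pi) * (p-3)! * (p-1)!) * (16/9)^(p-2)

open Asymptotics

lemma isEquivalent_natCast_add_const (c : ℝ) :
    (fun n : ℕ => (n : ℝ) + c) ~[atTop] fun n => (n : ℝ) :=
  IsEquivalent.refl.add_const_of_norm_tendsto_atTop
    (tendsto_norm_atTop_atTop.comp tendsto_natCast_atTop_atTop)

lemma isEquivalent_factorial_add (a : ℕ) :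
    (fun n : ℕ => ((n + a)! : ℝ)) ~[atTop] fun n => (n ! : ℝ) * (n : ℝ) ^ a := by
  have hdesc : (fun n : ℕ => ((n + a).descFactorial a : ℝ)) ~[atTop] fun n => (n : ℝ) ^ a :=
    ((isEquivalent_descFactorial a).comp_tendsto (tendsto_add_atTop_nat a)).trans <| by
      push_cast [Function.comp_def]
      exact (isEquivalent_natCast_add_const a).pow a
  refine (IsEquivalent.refl.mul hdesc).congr_left (Eventually.of_forall fun n => ?_)
  simp only [Pi.mul_apply]
  rw [← Nat.cast_mul, ← Nat.factorial_mul_descFactorial (Nat.le_add_left a n), Nat.add_sub_cancel]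

noncomputable def stirlingApprox (n : ℕ) : ℝ := √(2 * n * π) * (n / exp 1) ^ n

lemma stirlingApprox_succ_mul_div {k n : ℕ} (hk : 0 < k) (hn : 0 < n) :
    stirlingApprox ((k + 1) * n) / (stirlingApprox n * stirlingApprox (k * n)) =
      √((k + 1) / (2 * π * k * n)) * ((k + 1) ^ (k + 1) / k ^ k : ℝ) ^ n := by
  unfold stirlingApprox
  rw [mul_mul_mul_comm, mul_div_mul_comm]
  congr 1
  · rw [← Real.sqrt_mul (by positivity), ← Real.sqrt_div' _ (by positivity)]
    congr 1
    push_cast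
    field_simp
  · have hx : (n : ℝ) / exp 1 ≠ 0 := by positivity
    push_cast
    rw [mul_div_assoc, mul_div_assoc, mul_pow, mul_pow]
    generalize (n : ℝ) / exp 1 = x at hx ⊢
    rw [div_pow, ← pow_mul, ← pow_mul, mul_comm (k + 1), mul_comm k, Nat.mul_add_one, pow_add,
      pow_add]
    field_simp

theorem isEquivalent_choose_succ_mul {k : ℕ} (hk : 0 < k) :
    (fun n : ℕ => (((k + 1) * n).choose n : ℝ)) ~[atTop]
      fun n => √((k + 1) / (2 * π * k * n)) * ((k + 1) ^ (k + 1) / k ^ k : ℝ) ^ n := by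
  have hS : (fun n : ℕ => (n ! : ℝ)) ~[atTop] stirlingApprox :=
    Stirling.factorial_isEquivalent_stirling
  have hS_mul : ∀ {j : ℕ}, 0 < j →
      (fun n : ℕ => ((j * n)! : ℝ)) ~[atTop] fun n => stirlingApprox (j * n) :=
    fun hj => hS.comp_tendsto (tendsto_id.const_mul_atTop' hj)
  refine (((hS_mul k.succ_pos).div (hS.mul (hS_mul hk))).congr_left ?_).congr_right ?_
  · refine Eventually.of_forall fun n => ?_
    simp only [Pi.div_apply, Pi.mul_apply]
    rw [Nat.cast_choose ℝ (Nat.le_mul_of_pos_left n k.succ_pos), Nat.add_one_mul,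
      Nat.add_sub_cancel]
  · filter_upwards [eventually_gt_atTop 0] with n hn
    exact stirlingApprox_succ_mul_div hk hn

theorem isEquivalent_factorial_div_factorial_mul_factorial {k : ℕ} (hk : 0 < k) (a b : ℕ) :
    (fun n : ℕ => (((k + 1) * n + a)! : ℝ) / (n ! * (k * n + b)!)) ~[atTop]
      fun n => √((k + 1) / (2 * π * k)) * (k + 1) ^ a / k ^ b * (n : ℝ) ^ ((a : ℝ) - b - 1 / 2) *
        ((k + 1) ^ (k + 1) / k ^ k : ℝ) ^ n := by
  have hsucc : 0 < k + 1 := k.succ_pos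
  have hshift : ∀ {j : ℕ} (c : ℕ), 0 < j →
      (fun n : ℕ => ((j * n + c)! : ℝ)) ~[atTop] fun n => ((j * n)! : ℝ) * ((j * n : ℕ) : ℝ) ^ c :=
    fun c hj => (isEquivalent_factorial_add c).comp_tendsto (tendsto_id.const_mul_atTop' hj)
  let g : ℕ → ℝ := fun n => (((k + 1) * n : ℕ) : ℝ) ^ a / ((k * n : ℕ) : ℝ) ^ b
  have hchoose : (fun n : ℕ => (((k + 1) * n + a)! : ℝ) / (n ! * (k * n + b)!)) ~[atTop]
      fun n => (((k + 1) * n).choose n : ℝ) * g n := by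
    refine ((hshift a hsucc).div (IsEquivalent.refl.mul (hshift b hk))).congr_right
      (Eventually.of_forall fun n => ?_)
    simp only [Pi.div_apply, Pi.mul_apply, g]
    rw [Nat.cast_choose ℝ (Nat.le_mul_of_pos_left n hsucc), Nat.add_one_mul, Nat.add_sub_cancel]
    field_simp
  refine hchoose.trans
    (((isEquivalent_choose_succ_mul hk).mul (IsEquivalent.refl (u := g))).congr_right ?_)
  filter_upwards [eventually_gt_atTop 0] with n hn
  have hn' : (0 : ℝ) < n := by exact_mod_cast hn
  simp only [Pi.mul_apply, g]
  rw [Real.rpow_sub hn', Real.rpow_sub hn', Real.rpow_natCast, Real.rpow_natCast,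
    ← Real.sqrt_eq_rpow, show (k + 1) / (2 * π * k * n) = (k + 1) / (2 * π * k) / (n : ℝ) by ring,
    Real.sqrt_div' _ hn'.le]
  push_cast [mul_pow]
  field_simp

lemma Tnp_eq {p : ℕ} (hp : 3 ≤ p) (n : ℕ) :
    Tnp n p = 2 * (2 * p - 3)! / ((p - 3)! * (p - 1)!) *
      ((4 * n + (2 * p - 5))! / (n ! * (3 * n + (2 * p - 3))!)) := by
  rw [Tnp, show 4 * n + 2 * p - 5 = 4 * n + (2 * p - 5) by omega,
    show 3 * n + 2 * p - 3 = 3 * n + (2 * p - 3) by omega]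
  push_cast
  field_simp

lemma Cp_eq {p : ℕ} (hp : 3 ≤ p) :
    Cp p = 2 * (2 * p - 3)! / ((p - 3)! * (p - 1)!) *
      (√((3 + 1) / (2 * π * 3)) * (3 + 1) ^ (2 * p - 5) / 3 ^ (2 * p - 3)) := by
  obtain ⟨m, rfl⟩ : ∃ m, p = m + 3 := ⟨p - 3, by omega⟩
  rw [Cp, show 2 * (m + 3) - 5 = 2 * m + 1 by omega, show 2 * (m + 3) - 3 = 2 * m + 3 by omega,
    show m + 3 - 2 = m + 1 by omega, show (3 + 1) / (2 * π * 3) = 2 ^ 2 / (6 * π) by ring,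
    Real.sqrt_div' _ (by positivity), Real.sqrt_sq two_pos.le, div_pow,
    show (16 : ℝ) = 4 ^ 2 by norm_num, show (9 : ℝ) = 3 ^ 2 by norm_num, ← pow_mul, ← pow_mul]
  field_simp
  ring

/-- For each fixed `p ≥ 3`, `#𝕋_{n,p} ∼ C(p) n^{-5/2} (256/27)^n` as `n → ∞`. -/
theorem Tnp_asymptotic (p : ℕ) (hp : 3 ≤ p) :
    Tendsto (fun n : ℕ => Tnp n p / (Cp p * (n:ℝ) ^ (-(5/2) : ℝ) * (256/27)^n))
      atTop (nhds 1) := by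
  have hratio := isEquivalent_factorial_div_factorial_mul_factorial three_pos (2 * p - 5) (2 * p - 3)
  push_cast at hratio
  have hexp : ((2 * p - 5 : ℕ) : ℝ) - (2 * p - 3 : ℕ) - 1 / 2 = -(5 / 2) := by
    rw [Nat.cast_sub (by omega), Nat.cast_sub (by omega)]
    ring
  have hT : (fun n => Tnp n p) ~[atTop]
      fun n => Cp p * (n : ℝ) ^ (-(5 / 2) : ℝ) * (256 / 27) ^ n := by
    rw [funext (Tnp_eq hp)]
    refine (IsEquivalent.refl.mul hratio).congr_right (Eventually.of_forall fun n => ?_)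
    simp only [Pi.mul_apply, Cp_eq hp, hexp]
    ring
  have hCp : 0 < Cp p := by unfold Cp; positivity
  have hne : ∀ᶠ n : ℕ in atTop, Cp p * (n : ℝ) ^ (-(5 / 2) : ℝ) * (256 / 27) ^ n ≠ 0 := by
    filter_upwards [eventually_gt_atTop 0] with n hn
    positivity
  exact (isEquivalent_iff_tendsto_one hne).mp hT
end

section
/- For every integer p ≥ 3, the partition function Z(p) := Σ_{n ≥ 0} (27/256)^n · #𝕋_{n,p} converges and equals 81(2p−4)! / (128(p−2)! p!) · (16/9)^p. -/
/-!
Write `B_a(x) = ∑ₙ A(a, n) xⁿ` for the Fuss–Catalan numbers `A(a, n) = a/(4n+a) · C(4n+a, n)`.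
The recurrence `A(a+1, n+1) = A(a, n+1) + A(a+4, n)` gives the convolution
`A(a+b, ·) = A(a, ·) ⋆ A(b, ·)`, hence `B_a = B_1 ^ a` and `B_1 = 1 + x B_1 ^ 4` for `0 ≤ x < 27/256`. Parametrising `x = u(1-u)³` with
`0 ≤ u < 1/4`, both `B_1(x)` and `1/(1-u)` are roots of this quartic below `4/3` (for `B_1` by
continuity, since `4/3` is a root only at `x = 27/256`), and there the root is unique. As the
coefficients are nonnegative, letting `u → 1/4` gives `B_a(27/256) = (4/3)^a`. Finally `#𝕋_{n,p}` is
a linear combination of `A(2p-4, n)` and `A(2p-3, n)`.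
-/

open Nat Filter Real

open Finset Topology

theorem hasSum_mul_pow_of_tendsto {ι : Type*} {l : Filter ι} [l.NeBot] {c : ℕ → ℝ}
    (hc : ∀ n, 0 ≤ c n) {x F : ι → ℝ} {R L : ℝ} (hxR : Tendsto x l (𝓝 R))
    (hx : ∀ᶠ i in l, 0 ≤ x i ∧ x i ≤ R) (hF : ∀ᶠ i in l, HasSum (fun n => c n * x i ^ n) (F i))
    (hFL : Tendsto F l (𝓝 L)) : HasSum (fun n => c n * R ^ n) L := by
  obtain ⟨i, hi⟩ := hx.exists
  have hterm (n : ℕ) : 0 ≤ c n * R ^ n := mul_nonneg (hc n) (pow_nonneg (hi.1.trans hi.2) n)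
  have hpartial (N : ℕ) : ∑ n ∈ range N, c n * R ^ n ≤ L :=
    le_of_tendsto_of_tendsto (tendsto_finsetSum _ fun n _ => (hxR.pow n).const_mul (c n)) hFL
      (by filter_upwards [hx, hF] with i hxi hFi
          exact sum_le_hasSum _ (fun n _ => mul_nonneg (hc n) (pow_nonneg hxi.1 n)) hFi)
  have hsum := summable_of_sum_range_le hterm hpartial
  have hle : L ≤ ∑' n, c n * R ^ n := le_of_tendsto hFL (by
    filter_upwards [hx, hF] with i hxi hFi
    exact hasSum_le (fun n => mul_le_mul_of_nonneg_left (pow_le_pow_left₀ hxi.1 hxi.2 n) (hc n))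
      hFi hsum.hasSum)
  exact le_antisymm (Real.tsum_le_of_sum_range_le hterm hpartial) hle ▸ hsum.hasSum

lemma choose_mul_pow_le_add_one_pow (N k : ℕ) {t : ℝ} (ht : 0 ≤ t) :
    N.choose k * t ^ k ≤ (t + 1) ^ N := by
  rcases le_or_gt k N with hk | hk
  · rw [add_pow]
    refine le_trans (le_of_eq (by ring)) (single_le_sum
      (f := fun m => t ^ m * 1 ^ (N - m) * N.choose m) (fun m _ => by positivity)
      (mem_range.2 (Nat.lt_succ_of_le hk)))
  · rw [Nat.choose_eq_zero_of_lt hk, CharP.cast_eq_zero, zero_mul]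
    positivity

lemma eq_of_eq_one_add_mul_pow_four {x y z : ℝ} (hx0 : 0 ≤ x) (hx : x ≤ 27 / 256)
    (hy0 : 0 ≤ y) (hy : y < 4 / 3) (hz0 : 0 ≤ z) (hz : z < 4 / 3)
    (hyx : y = 1 + x * y ^ 4) (hzx : z = 1 + x * z ^ 4) : y = z := by
  have hS : y ^ 3 + y ^ 2 * z + y * z ^ 2 + z ^ 3 < 256 / 27 := by nlinarith [mul_nonneg hy0 hz0]
  have hfactor : (y - z) * (1 - x * (y ^ 3 + y ^ 2 * z + y * z ^ 2 + z ^ 3)) = 0 := by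
    linear_combination hyx - hzx
  refine sub_eq_zero.1 ((mul_eq_zero.1 hfactor).resolve_right fun h => ?_)
  nlinarith [mul_le_mul_of_nonneg_left hS.le hx0]

lemma mul_one_sub_pow_three_mem_Ico {u : ℝ} (hu : u ∈ Set.Ico (0 : ℝ) (1 / 4)) :
    u * (1 - u) ^ 3 ∈ Set.Ico (0 : ℝ) (27 / 256) := by
  obtain ⟨hu0, hu⟩ := hu
  refine ⟨mul_nonneg hu0 (pow_nonneg (by linarith) 3), ?_⟩
  nlinarith [mul_pos (pow_pos (by linarith : (0 : ℝ) < 1 - 4 * u) 2)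
    (by nlinarith : (0 : ℝ) < 16 * u ^ 2 - 40 * u + 27)]

/-- `fussCatalan a n = a / (4n + a) * C(4n + a, n)` is the coefficient of `xⁿ` in `B(x) ^ a`,
where `B = 1 + x B⁴`; the case split makes `fussCatalan 0 0 = 1`. -/
noncomputable def fussCatalan (a : ℕ) : ℕ → ℝ
  | 0 => 1
  | n + 1 => a * (4 * n + a + 3)! / ((n + 1)! * (3 * n + a + 3)! : ℝ)

lemma fussCatalan_zero (a : ℕ) : fussCatalan a 0 = 1 := rfl

lemma fussCatalan_zero_succ (n : ℕ) : fussCatalan 0 (n + 1) = 0 := by simp [fussCatalan]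

lemma fussCatalan_nonneg (a n : ℕ) : 0 ≤ fussCatalan a n := by
  cases n <;> simp only [fussCatalan] <;> positivity

lemma fussCatalan_succ (a n : ℕ) :
    fussCatalan (a + 1) n = (a + 1) * (4 * n + a)! / (n ! * (3 * n + a + 1)! : ℝ) := by
  cases n with
  | zero =>
    simp only [fussCatalan, mul_zero, zero_add, factorial_zero, cast_one, factorial_succ,
      cast_mul, cast_add, one_mul]
    field_simp
  | succ n =>
    simp only [fussCatalan]
    rw [show 4 * (n + 1) + a = 4 * n + (a + 1) + 3 by ring,
      show 3 * (n + 1) + a + 1 = 3 * n + (a + 1) + 3 by ring]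
    push_cast
    ring

lemma fussCatalan_succ_succ (a n : ℕ) :
    fussCatalan (a + 1) (n + 1) = fussCatalan a (n + 1) + fussCatalan (a + 4) n := by
  rw [fussCatalan_succ, show a + 4 = a + 3 + 1 by rfl, fussCatalan_succ]
  simp only [fussCatalan]
  rw [show 4 * (n + 1) + a = 4 * n + a + 3 + 1 by ring,
    show 3 * (n + 1) + a + 1 = 3 * n + a + 3 + 1 by ring,
    show 4 * n + (a + 3) = 4 * n + a + 3 by ring,
    show 3 * n + (a + 3) + 1 = 3 * n + a + 3 + 1 by ring]
  push_cast [Nat.factorial_succ]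
  field_simp
  ring

theorem sum_antidiagonal_fussCatalan (n a b : ℕ) :
    ∑ ij ∈ antidiagonal n, fussCatalan a ij.1 * fussCatalan b ij.2 = fussCatalan (a + b) n := by
  induction n using Nat.strong_induction_on generalizing a b with
  | _ n ih =>
  cases n with
  | zero => simp [fussCatalan_zero]
  | succ n =>
    induction a with
    | zero => simp [Nat.sum_antidiagonal_succ, fussCatalan_zero, fussCatalan_zero_succ]
    | succ a iha =>
      rw [Nat.sum_antidiagonal_succ] at iha ⊢
      simp only [fussCatalan_succ_succ, add_mul, sum_add_distrib, fussCatalan_zero] at iha ⊢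
      rw [← add_assoc, iha, ih n (lt_add_one n), add_right_comm a 1 b, fussCatalan_succ_succ,
        add_right_comm a 4 b]

lemma fussCatalan_le_choose (a n : ℕ) : fussCatalan a n ≤ (4 * n + a).choose n := by
  cases n with
  | zero => simp [fussCatalan]
  | succ n =>
    rw [Nat.cast_choose ℝ (by omega), show 4 * (n + 1) + a - (n + 1) = 3 * n + a + 3 by omega,
      show 4 * (n + 1) + a = 4 * n + a + 3 + 1 by ring]
    simp only [fussCatalan]
    push_cast [Nat.factorial_succ]
    gcongr
    linarith

lemma fussCatalan_le (a n : ℕ) : fussCatalan a n ≤ (4 / 3) ^ a * (256 / 27) ^ n :=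
  calc fussCatalan a n ≤ (4 * n + a).choose n := fussCatalan_le_choose a n
    _ = (4 * n + a).choose n * (1 / 3) ^ n * 3 ^ n := by
        rw [mul_assoc, ← mul_pow]; norm_num
    _ ≤ (1 / 3 + 1) ^ (4 * n + a) * 3 ^ n := by
        gcongr; exact choose_mul_pow_le_add_one_pow _ _ (by norm_num)
    _ = (4 / 3) ^ a * (256 / 27) ^ n := by
        rw [pow_add, pow_mul, mul_right_comm, ← mul_pow]; norm_num; ring

section Series

variable {x : ℝ}

lemma summable_fussCatalan_mul_pow (a : ℕ) (hx : x ∈ Set.Ico (0 : ℝ) (27 / 256)) :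
    Summable (fun n => fussCatalan a n * x ^ n) := by
  obtain ⟨hx0, hx⟩ := hx
  refine .of_nonneg_of_le (fun n => mul_nonneg (fussCatalan_nonneg a n) (pow_nonneg hx0 n))
    (fun n => ?_) ((summable_geometric_of_lt_one (by positivity) (by linarith :
      256 / 27 * x < 1)).mul_left ((4 / 3) ^ a))
  rw [mul_pow, ← mul_assoc]
  gcongr
  exact fussCatalan_le a n

noncomputable def fussCatalanSeries (a : ℕ) (x : ℝ) : ℝ := ∑' n, fussCatalan a n * x ^ n

lemma fussCatalanSeries_zero : fussCatalanSeries 0 x = 1 := by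
  rw [fussCatalanSeries, tsum_eq_single 0 fun n hn => ?_]
  · simp [fussCatalan_zero]
  · obtain ⟨n, rfl⟩ := Nat.exists_eq_succ_of_ne_zero hn
    simp [fussCatalan_zero_succ]

lemma fussCatalanSeries_add (a b : ℕ) (hx : x ∈ Set.Ico (0 : ℝ) (27 / 256)) :
    fussCatalanSeries (a + b) x = fussCatalanSeries a x * fussCatalanSeries b x := by
  have hnorm (c : ℕ) : Summable fun n => ‖fussCatalan c n * x ^ n‖ :=
    summable_norm_iff.2 (summable_fussCatalan_mul_pow c hx)
  rw [fussCatalanSeries, fussCatalanSeries, fussCatalanSeries,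
    tsum_mul_tsum_eq_tsum_sum_antidiagonal_of_summable_norm (hnorm a) (hnorm b)]
  refine tsum_congr fun n => ?_
  rw [← sum_antidiagonal_fussCatalan n a b, sum_mul]
  refine sum_congr rfl fun ij hij => ?_
  rw [← mem_antidiagonal.1 hij, pow_add]
  ring

lemma fussCatalanSeries_eq_pow (a : ℕ) (hx : x ∈ Set.Ico (0 : ℝ) (27 / 256)) :
    fussCatalanSeries a x = fussCatalanSeries 1 x ^ a := by
  induction a with
  | zero => exact fussCatalanSeries_zero
  | succ a ih => rw [fussCatalanSeries_add a 1 hx, ih, pow_succ]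

lemma fussCatalanSeries_one_eq (hx : x ∈ Set.Ico (0 : ℝ) (27 / 256)) :
    fussCatalanSeries 1 x = 1 + x * fussCatalanSeries 1 x ^ 4 := by
  have hshift (n : ℕ) : fussCatalan 1 (n + 1) * x ^ (n + 1) = x * (fussCatalan 4 n * x ^ n) := by
    rw [fussCatalan_succ_succ, fussCatalan_zero_succ, zero_add, pow_succ]
    ring
  rw [← fussCatalanSeries_eq_pow 4 hx, fussCatalanSeries,
    (summable_fussCatalan_mul_pow 1 hx).tsum_eq_zero_add, tsum_congr hshift, tsum_mul_left,
    fussCatalan_zero, pow_zero, mul_one, fussCatalanSeries]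

lemma continuousOn_fussCatalanSeries (a : ℕ) {r : ℝ} (hr : r ∈ Set.Ico (0 : ℝ) (27 / 256)) :
    ContinuousOn (fussCatalanSeries a) (Set.Icc 0 r) := by
  refine continuousOn_tsum (fun n => by fun_prop) (summable_fussCatalan_mul_pow a hr)
    fun n y hy => ?_
  rw [norm_mul, norm_pow, Real.norm_of_nonneg (fussCatalan_nonneg a n), Real.norm_of_nonneg hy.1]
  gcongr
  · exact fussCatalan_nonneg a n
  · exact hy.1
  · exact hy.2

lemma fussCatalanSeries_one_lt (hx : x ∈ Set.Ico (0 : ℝ) (27 / 256)) :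
    fussCatalanSeries 1 x < 4 / 3 := by
  by_contra! hge
  have h0 : fussCatalanSeries 1 0 = 1 := by
    simpa using fussCatalanSeries_one_eq (x := 0) (by norm_num)
  obtain ⟨c, hc, hc43⟩ := intermediate_value_Icc hx.1 (continuousOn_fussCatalanSeries 1 hx)
    ⟨by rw [h0]; norm_num, hge⟩
  have hc' : c ∈ Set.Ico (0 : ℝ) (27 / 256) := ⟨hc.1, hc.2.trans_lt hx.2⟩
  -- `4/3 = 1 + c (4/3)⁴` would force `c = 27/256`.
  have := fussCatalanSeries_one_eq hc'
  rw [hc43] at this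
  linarith [hc'.2]

lemma fussCatalanSeries_mul_one_sub_pow_three (a : ℕ) {u : ℝ} (hu : u ∈ Set.Ico (0 : ℝ) (1 / 4)) :
    fussCatalanSeries a (u * (1 - u) ^ 3) = (1 - u)⁻¹ ^ a := by
  have hx := mul_one_sub_pow_three_mem_Ico hu
  have h1u : 0 < 1 - u := by linarith [hu.2]
  rw [fussCatalanSeries_eq_pow a hx]
  congr 1
  refine eq_of_eq_one_add_mul_pow_four hx.1 hx.2.le ?_ (fussCatalanSeries_one_lt hx)
    (by positivity) ?_ (fussCatalanSeries_one_eq hx) (by field_simp; ring)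
  · exact tsum_nonneg fun n => mul_nonneg (fussCatalan_nonneg 1 n) (pow_nonneg hx.1 n)
  · rw [inv_lt_comm₀ h1u (by norm_num)]
    linarith [hu.2]

end Series

theorem hasSum_fussCatalan_mul_pow_critical (a : ℕ) :
    HasSum (fun n => fussCatalan a n * (27 / 256) ^ n) ((4 / 3) ^ a) := by
  have hcont : ContinuousAt (fun u : ℝ => (u * (1 - u) ^ 3, (1 - u)⁻¹ ^ a)) (1 / 4) := by
    fun_prop (disch := norm_num)
  have hlim : Tendsto (fun u : ℝ => (u * (1 - u) ^ 3, (1 - u)⁻¹ ^ a)) (𝓝[<] (1 / 4))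
      (𝓝 (27 / 256, (4 / 3) ^ a)) := by
    convert hcont.tendsto.mono_left nhdsWithin_le_nhds using 3 <;> norm_num
  have hIco : Set.Ico (0 : ℝ) (1 / 4) ∈ 𝓝[<] (1 / 4) := Ico_mem_nhdsLT (by norm_num)
  refine hasSum_mul_pow_of_tendsto (fussCatalan_nonneg a) hlim.fst_nhds ?_ ?_ hlim.snd_nhds
  · filter_upwards [hIco] with u hu
    have hx := mul_one_sub_pow_three_mem_Ico hu
    exact ⟨hx.1, hx.2.le⟩
  · filter_upwards [hIco] with u hu
    rw [← fussCatalanSeries_mul_one_sub_pow_three a hu]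
    exact (summable_fussCatalan_mul_pow a (mul_one_sub_pow_three_mem_Ico hu)).hasSum

lemma Tnp_add_three (n s : ℕ) :
    Tnp n (s + 3) = 2 * (2 * s + 3)! / ((s + 1)! * (s + 3)! : ℝ) * fussCatalan (2 * s + 2) n
      - 3 * (2 * s + 2)! / (s ! * (s + 3)! : ℝ) * fussCatalan (2 * s + 3) n := by
  rw [Tnp, show 2 * (s + 3) - 3 = 2 * s + 3 by omega,
    show 4 * n + 2 * (s + 3) - 5 = 4 * n + 2 * s + 1 by omega, show s + 3 - 3 = s by omega,
    show s + 3 - 1 = s + 2 by omega, show 3 * n + 2 * (s + 3) - 3 = 3 * n + 2 * s + 3 by omega,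
    fussCatalan_succ, fussCatalan_succ]
  simp only [← add_assoc]
  push_cast [Nat.factorial_succ]
  field_simp
  ring

/-- For every `p ≥ 3`, the partition function `Z(p) = Σ_{n ≥ 0} (27/256)^n #𝕋_{n,p}`
converges, with sum `81 (2p-4)! / (128 (p-2)! p!) · (16/9)^p`. -/
theorem Z_partition_function (p : ℕ) (hp : 3 ≤ p) :
    HasSum (fun n : ℕ => (27/256 : ℝ)^n * Tnp n p)
      (81 * ((2*p-4)! : ℝ) / (128 * (p-2)! * p !) * (16/9)^p) := by
  obtain ⟨s, rfl⟩ : ∃ s, p = s + 3 := ⟨p - 3, by omega⟩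
  set c₁ : ℝ := 2 * (2 * s + 3)! / ((s + 1)! * (s + 3)!)
  set c₂ : ℝ := 3 * (2 * s + 2)! / (s ! * (s + 3)!)
  have hterms : (fun n : ℕ => (27 / 256 : ℝ) ^ n * Tnp n (s + 3)) = fun n =>
      c₁ * (fussCatalan (2 * s + 2) n * (27 / 256) ^ n)
        - c₂ * (fussCatalan (2 * s + 3) n * (27 / 256) ^ n) := by
    funext n
    rw [Tnp_add_three]
    ring
  have hvalue : 81 * ((2 * (s + 3) - 4)! : ℝ) / (128 * (s + 3 - 2)! * (s + 3)!) * (16 / 9) ^ (s + 3)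
      = c₁ * (4 / 3) ^ (2 * s + 2) - c₂ * (4 / 3) ^ (2 * s + 3) := by
    rw [show 2 * (s + 3) - 4 = 2 * s + 2 by omega, show s + 3 - 2 = s + 1 by omega,
      pow_succ _ (2 * s + 2), show (4 / 3 : ℝ) ^ (2 * s + 2) = (16 / 9) ^ (s + 1) by
        rw [show 2 * s + 2 = 2 * (s + 1) by ring, pow_mul]; norm_num, pow_add _ (s + 1) 2]
    push_cast [c₁, c₂, Nat.factorial_succ]
    field_simp
    ring
  rw [hterms, hvalue]
  exact ((hasSum_fussCatalan_mul_pow_critical _).mul_left c₁).sub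
    ((hasSum_fussCatalan_mul_pow_critical _).mul_left c₂)
end

section
/- There exists a constant c > 0 such that for all n ≥ 1 and p ≥ 3, #𝕋_{n,p} ≤ c · C(p) · n^{−5/2} · (256/27)^n; furthermore, for each α > 0 there exists c(α) > 0 such that #𝕋_{n,p} ≥ c(α) · C(p) · n^{−5/2} · (256/27)^n uniformly for all n ≥ 1 and 3 ≤ p ≤ α√n. -/
open Nat Filter Real

/-!
Write `p = q + 3`. Then `#𝕋_{n,p} = 6 √(6π) C(p) · scaledTnp n q`, and the ratio
`scaledTnp n (q+1) / scaledTnp n q` is a product of two factors of the form `b / (a + b)` with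
`b ≥ 12n`, each lying between `exp(-a/12n)` and `1`; hence
`scaledTnp n 0 · e^{-p²/n} ≤ scaledTnp n q ≤ scaledTnp n 0`, and `p ≤ α√n` bounds the
exponential loss by `e^{-α²}`. Finally `scaledTnp n 0 = 9/16 · centralTnp n · (256/27)^n`, where
`centralTnp n ^ 2 · n⁵` increases and `centralTnp n ^ 2 · (n+1)⁵` decreases, which traps
`centralTnp n · n^{5/2}` between its values `9/512` at `n = 1` and `1/6` at `n = 0`.
-/

noncomputable def scaledTnp (n q : ℕ) : ℝ :=
  ((4*n+2*q+1)! : ℝ) / (n ! * (3*n+2*q+3)!) * (9/16)^(q+1)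

noncomputable def centralTnp (n : ℕ) : ℝ :=
  ((4*n+1)! : ℝ) / (n ! * (3*n+3)!) * (27/256)^n

lemma scaledTnp_pos (n q : ℕ) : 0 < scaledTnp n q := by unfold scaledTnp; positivity

lemma centralTnp_nonneg (n : ℕ) : 0 ≤ centralTnp n := by unfold centralTnp; positivity

lemma Cp_pos (p : ℕ) : 0 < Cp p := by unfold Cp; positivity

lemma Tnp_add_three_s7 (n q : ℕ) :
    Tnp n (q+3) = 6 * √(6*π) * Cp (q+3) * scaledTnp n q := by
  simp only [Tnp, Cp, scaledTnp, add_tsub_cancel_right, show 2*(q+3)-3 = 2*q+3 by omega,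
    show 4*n+2*(q+3)-5 = 4*n+2*q+1 by omega, show 3*n+2*(q+3)-3 = 3*n+2*q+3 by omega,
    show q+3-2 = q+1 by omega, show q+3-1 = q+2 by omega]
  have : √(6*π) ≠ 0 := by positivity
  push_cast
  field_simp
  rw [mul_assoc, ← mul_pow]
  norm_num

lemma scaledTnp_succ (n q : ℕ) :
    scaledTnp n (q+1) = scaledTnp n q *
      ((12*n+6*q+9) / (12*n+8*q+20) * ((12*n+6*q+6) / (12*n+8*q+16))) := by
  simp only [scaledTnp, show 4*n+2*(q+1)+1 = 4*n+2*q+1+1+1 by ring,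
    show 3*n+2*(q+1)+3 = 3*n+2*q+3+1+1 by ring, factorial_succ]
  push_cast
  field_simp
  ring

lemma scaledTnp_zero (n : ℕ) : scaledTnp n 0 = 9/16 * centralTnp n * (256/27)^n := by
  simp only [scaledTnp, centralTnp]
  rw [mul_assoc (9/16 : ℝ), mul_assoc _ ((27/256 : ℝ)^n), ← mul_pow]
  norm_num
  ring

lemma centralTnp_succ (n : ℕ) :
    centralTnp (n+1) = centralTnp n *
      (27 * ((4*n+5) * (4*n+3) * (4*n+2)) / (64 * ((3*n+6) * (3*n+5) * (3*n+4)))) := by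
  simp only [centralTnp, show 4*(n+1)+1 = 4*n+1+1+1+1+1 by ring,
    show 3*(n+1)+3 = 3*n+3+1+1+1 by ring, factorial_succ]
  push_cast
  field_simp
  ring

lemma scaledTnp_succ_le (n q : ℕ) : scaledTnp n (q+1) ≤ scaledTnp n q := by
  rw [scaledTnp_succ]
  refine mul_le_of_le_one_right (scaledTnp_pos n q).le
    (mul_le_one₀ (div_le_one_of_le₀ ?_ ?_) (by positivity) (div_le_one_of_le₀ ?_ ?_)) <;>
  linarith [(q.cast_nonneg : (0:ℝ) ≤ q)]

lemma scaledTnp_le_scaledTnp_zero (n q : ℕ) : scaledTnp n q ≤ scaledTnp n 0 :=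
  antitone_nat_of_succ_le (scaledTnp_succ_le n) (Nat.zero_le q)

lemma exp_neg_div_le_div_add {a b c : ℝ} (ha : 0 ≤ a) (hc : 0 < c) (hcb : c ≤ b) :
    exp (-(a / c)) ≤ b / (a + b) := by
  have hb : 0 < b := hc.trans_le hcb
  calc exp (-(a / c)) ≤ exp (-(a / b)) :=
        exp_le_exp.2 (neg_le_neg (div_le_div_of_nonneg_left ha hc hcb))
    _ ≤ (a / b + 1)⁻¹ := by
        rw [exp_neg]; exact inv_anti₀ (by positivity) (add_one_le_exp _)
    _ = b / (a + b) := by field_simp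

lemma scaledTnp_mul_exp_le_succ {n : ℕ} (hn : 0 < n) (q : ℕ) :
    scaledTnp n q * exp (-((2*q+7) / n)) ≤ scaledTnp n (q+1) := by
  have hn' : (0:ℝ) < n := by exact_mod_cast hn
  have hq : (0:ℝ) ≤ q := q.cast_nonneg
  have h₁ : exp (-((2*q+11) / (12*n))) ≤ (12*n+6*q+9) / (12*n+8*q+20) := by
    convert exp_neg_div_le_div_add (a := 2*q+11) (b := 12*n+6*q+9) (c := 12*n)
      (by positivity) (by positivity) (by linarith) using 2
    ring
  have h₂ : exp (-((2*q+10) / (12*n))) ≤ (12*n+6*q+6) / (12*n+8*q+16) := by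
    convert exp_neg_div_le_div_add (a := 2*q+10) (b := 12*n+6*q+6) (c := 12*n)
      (by positivity) (by positivity) (by linarith) using 2
    ring
  have hsum : (2*q+11) / (12*n) + (2*q+10) / (12*n) ≤ (2*q+7) / (n:ℝ) := by
    rw [← add_div, div_le_div_iff₀ (by positivity) hn']
    nlinarith
  rw [scaledTnp_succ]
  refine mul_le_mul_of_nonneg_left ?_ (scaledTnp_pos n q).le
  calc exp (-((2*q+7) / n)) ≤ exp (-((2*q+11) / (12*n)) + -((2*q+10) / (12*n))) :=
        exp_le_exp.2 (by linarith)
    _ ≤ _ := by rw [exp_add]; exact mul_le_mul h₁ h₂ (exp_pos _).le (by positivity)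

lemma scaledTnp_zero_mul_exp_le {n : ℕ} (hn : 0 < n) (q : ℕ) :
    scaledTnp n 0 * exp (-(((q:ℝ)+3)^2 / n)) ≤ scaledTnp n q := by
  induction q with
  | zero =>
    refine mul_le_of_le_one_right (scaledTnp_pos n 0).le (exp_le_one_iff.2 ?_)
    rw [neg_nonpos]; positivity
  | succ q ih =>
    have hn' : (n:ℝ) ≠ 0 := by positivity
    calc scaledTnp n 0 * exp (-((((q+1 : ℕ) : ℝ)+3)^2 / n))
        = scaledTnp n 0 * exp (-(((q:ℝ)+3)^2 / n)) * exp (-((2*q+7) / n)) := by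
          rw [mul_assoc, ← exp_add]; push_cast; field_simp; ring_nf
      _ ≤ scaledTnp n q * exp (-((2*q+7) / n)) := by gcongr
      _ ≤ scaledTnp n (q+1) := scaledTnp_mul_exp_le_succ hn q

lemma antitone_centralTnp_sq_mul : Antitone fun n : ℕ ↦ centralTnp n ^ 2 * ((n:ℝ)+1)^5 := by
  refine antitone_nat_of_succ_le fun n ↦ ?_
  rw [centralTnp_succ, mul_pow, mul_assoc]
  refine mul_le_mul_of_nonneg_left ?_ (sq_nonneg _)
  rw [div_pow, div_mul_eq_mul_div, div_le_iff₀ (by positivity), ← sub_nonneg]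
  -- Both here and below, the difference is a polynomial in `n` with nonnegative coefficients.
  push_cast
  ring_nf
  positivity

lemma monotone_centralTnp_sq_mul : Monotone fun n : ℕ ↦ centralTnp n ^ 2 * (n:ℝ)^5 := by
  refine monotone_nat_of_le_succ fun n ↦ ?_
  rw [centralTnp_succ, mul_pow, mul_assoc]
  refine mul_le_mul_of_nonneg_left ?_ (sq_nonneg _)
  rw [div_pow, div_mul_eq_mul_div, le_div_iff₀ (by positivity), ← sub_nonneg]
  push_cast
  ring_nf
  positivity

lemma rpow_neg_five_halves_sq {x : ℝ} (hx : 0 ≤ x) : (x ^ (-(5/2) : ℝ))^2 = (x^5)⁻¹ := by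
  rw [← rpow_natCast, ← rpow_mul hx, ← rpow_natCast x 5, ← rpow_neg hx]
  norm_num

lemma le_mul_rpow_neg_five_halves {g c x : ℝ} (hc : 0 ≤ c) (hx : 0 < x)
    (h : g^2 * x^5 ≤ c^2) : g ≤ c * x ^ (-(5/2) : ℝ) := by
  refine le_of_sq_le_sq ?_ (by positivity)
  rwa [mul_pow, rpow_neg_five_halves_sq hx.le, le_mul_inv_iff₀ (by positivity)]

lemma mul_rpow_neg_five_halves_le {g c x : ℝ} (hg : 0 ≤ g) (hx : 0 < x)
    (h : c^2 ≤ g^2 * x^5) : c * x ^ (-(5/2) : ℝ) ≤ g := by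
  refine le_of_sq_le_sq ?_ hg
  rwa [mul_pow, rpow_neg_five_halves_sq hx.le, mul_inv_le_iff₀ (by positivity)]

lemma centralTnp_le {n : ℕ} (hn : 0 < n) : centralTnp n ≤ 1/6 * (n:ℝ) ^ (-(5/2) : ℝ) := by
  refine le_mul_rpow_neg_five_halves (by norm_num) (by exact_mod_cast hn) ?_
  calc centralTnp n ^ 2 * (n:ℝ)^5 ≤ centralTnp n ^ 2 * ((n:ℝ)+1)^5 := by gcongr; linarith
    _ ≤ centralTnp 0 ^ 2 * ((0:ℕ)+1)^5 := antitone_centralTnp_sq_mul (Nat.zero_le n)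
    _ = (1/6)^2 := by norm_num [centralTnp, factorial]

lemma le_centralTnp {n : ℕ} (hn : 0 < n) : 9/512 * (n:ℝ) ^ (-(5/2) : ℝ) ≤ centralTnp n := by
  refine mul_rpow_neg_five_halves_le (centralTnp_nonneg n) (by exact_mod_cast hn) ?_
  calc (9/512 : ℝ)^2 = centralTnp 1 ^ 2 * ((1:ℕ):ℝ)^5 := by norm_num [centralTnp, factorial]
    _ ≤ centralTnp n ^ 2 * (n:ℝ)^5 := monotone_centralTnp_sq_mul hn

lemma scaledTnp_le {n : ℕ} (hn : 0 < n) (q : ℕ) :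
    scaledTnp n q ≤ 3/32 * (n:ℝ) ^ (-(5/2) : ℝ) * (256/27)^n :=
  calc scaledTnp n q ≤ scaledTnp n 0 := scaledTnp_le_scaledTnp_zero n q
    _ = 9/16 * centralTnp n * (256/27)^n := scaledTnp_zero n
    _ ≤ 9/16 * (1/6 * (n:ℝ) ^ (-(5/2) : ℝ)) * (256/27)^n := by gcongr; exact centralTnp_le hn
    _ = 3/32 * (n:ℝ) ^ (-(5/2) : ℝ) * (256/27)^n := by ring

lemma le_scaledTnp {n : ℕ} (hn : 0 < n) (q : ℕ) :
    81/8192 * exp (-(((q:ℝ)+3)^2 / n)) * (n:ℝ) ^ (-(5/2) : ℝ) * (256/27)^n ≤ scaledTnp n q :=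
  calc 81/8192 * exp (-(((q:ℝ)+3)^2 / n)) * (n:ℝ) ^ (-(5/2) : ℝ) * (256/27)^n
      = 9/16 * (9/512 * (n:ℝ) ^ (-(5/2) : ℝ)) * (256/27)^n * exp (-(((q:ℝ)+3)^2 / n)) := by
        ring
    _ ≤ 9/16 * centralTnp n * (256/27)^n * exp (-(((q:ℝ)+3)^2 / n)) := by
        gcongr; exact le_centralTnp hn
    _ = scaledTnp n 0 * exp (-(((q:ℝ)+3)^2 / n)) := by rw [scaledTnp_zero]
    _ ≤ scaledTnp n q := scaledTnp_zero_mul_exp_le hn q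

lemma Tnp_le {n p : ℕ} (hn : 0 < n) (hp : 3 ≤ p) :
    Tnp n p ≤ 9/16 * √(6*π) * Cp p * (n:ℝ) ^ (-(5/2) : ℝ) * (256/27)^n := by
  obtain ⟨q, rfl⟩ := Nat.exists_eq_add_of_le' hp
  have := Cp_pos (q+3)
  calc Tnp n (q+3) = 6 * √(6*π) * Cp (q+3) * scaledTnp n q := Tnp_add_three_s7 n q
    _ ≤ 6 * √(6*π) * Cp (q+3) * (3/32 * (n:ℝ) ^ (-(5/2) : ℝ) * (256/27)^n) := by
        gcongr; exact scaledTnp_le hn q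
    _ = _ := by ring

lemma le_Tnp {n p : ℕ} (hn : 0 < n) (hp : 3 ≤ p) :
    243/4096 * √(6*π) * Cp p * exp (-((p:ℝ)^2 / n)) * (n:ℝ) ^ (-(5/2) : ℝ) * (256/27)^n ≤
      Tnp n p := by
  obtain ⟨q, rfl⟩ := Nat.exists_eq_add_of_le' hp
  have := Cp_pos (q+3)
  calc _ = 6 * √(6*π) * Cp (q+3) *
        (81/8192 * exp (-(((q:ℝ)+3)^2 / n)) * (n:ℝ) ^ (-(5/2) : ℝ) * (256/27)^n) := by
        push_cast; ring
    _ ≤ 6 * √(6*π) * Cp (q+3) * scaledTnp n q := by gcongr; exact le_scaledTnp hn q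
    _ = Tnp n (q+3) := (Tnp_add_three_s7 n q).symm

/-- Uniform upper bound `#𝕋_{n,p} ≤ c C(p) n^{-5/2} (256/27)^n` for all `n ≥ 1`, `p ≥ 3`,
and a matching lower bound, uniform over `n ≥ 1` and `3 ≤ p ≤ α√n`, for each `α > 0`. -/
theorem Tnp_uniform_bounds :
    (∃ c > (0:ℝ), ∀ n : ℕ, 1 ≤ n → ∀ p : ℕ, 3 ≤ p →
      Tnp n p ≤ c * Cp p * (n:ℝ) ^ (-(5/2) : ℝ) * (256/27)^n) ∧
    (∀ α > (0:ℝ), ∃ c > (0:ℝ), ∀ n : ℕ, 1 ≤ n → ∀ p : ℕ, 3 ≤ p → (p:ℝ) ≤ α * Real.sqrt n →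
      c * Cp p * (n:ℝ) ^ (-(5/2) : ℝ) * (256/27)^n ≤ Tnp n p) := by
  refine ⟨⟨9/16 * √(6*π), by positivity, fun n hn p hp ↦ Tnp_le hn hp⟩,
    fun α _ ↦ ⟨243/4096 * √(6*π) * exp (-α^2), by positivity, fun n hn p hp hpα ↦ ?_⟩⟩
  have hn' : (0:ℝ) < n := by exact_mod_cast hn
  have hpn : (p:ℝ)^2 / n ≤ α^2 := by
    rw [div_le_iff₀ hn', ← sq_sqrt hn'.le, ← mul_pow]
    exact pow_le_pow_left₀ p.cast_nonneg hpα 2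
  have := Cp_pos p
  calc 243/4096 * √(6*π) * exp (-α^2) * Cp p * (n:ℝ) ^ (-(5/2) : ℝ) * (256/27)^n
      = 243/4096 * √(6*π) * Cp p * exp (-α^2) * (n:ℝ) ^ (-(5/2) : ℝ) * (256/27)^n := by ring
    _ ≤ 243/4096 * √(6*π) * Cp p * exp (-((p:ℝ)^2 / n)) * (n:ℝ) ^ (-(5/2) : ℝ) * (256/27)^n := by
        gcongr
    _ ≤ Tnp n p := le_Tnp hn hp
end

section
/- The function f(x) = (1 + x/4)^{4+x} / (1 + x/3)^{3+x} satisfies f(x) ≤ 1 for all x ≥ 0. -/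
open Real

/-!
Writing `h u = u log u`, one has `(a + x) log (1 + x/a) = x · (h u - h 1)/(u - 1)` with
`u = 1 + x/a`. Since `h` is convex, this secant slope increases with `u`, hence decreases with `a`;
the theorem is the case `a = 3 ≤ 4 = b`.
-/

lemma mul_log_div_sub_one_le {u v : ℝ} (hu : 1 < u) (huv : u ≤ v) :
    u * log u / (u - 1) ≤ v * log v / (v - 1) := by
  have := convexOn_mul_log.secant_mono (a := 1) (by simp) (Set.mem_Ici.2 (by linarith))
    (Set.mem_Ici.2 (by linarith)) hu.ne' (by linarith) huv
  simpa using this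

lemma add_mul_log_one_add_div (a : ℝ) {x : ℝ} (hx : x ≠ 0) :
    (a + x) * log (1 + x / a) = x * ((1 + x / a) * log (1 + x / a) / (1 + x / a - 1)) := by
  rcases eq_or_ne a 0 with rfl | ha
  · simp
  rw [add_sub_cancel_left]
  field_simp

lemma add_mul_log_one_add_div_le {a b x : ℝ} (ha : 0 < a) (hab : a ≤ b) (hx : 0 ≤ x) :
    (b + x) * log (1 + x / b) ≤ (a + x) * log (1 + x / a) := by
  rcases hx.eq_or_lt with rfl | hx
  · simp
  rw [add_mul_log_one_add_div a hx.ne', add_mul_log_one_add_div b hx.ne']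
  have hb : 0 < b := ha.trans_le hab
  exact mul_le_mul_of_nonneg_left
    (mul_log_div_sub_one_le (lt_add_of_pos_right 1 (div_pos hx hb)) (by gcongr)) hx.le

theorem one_add_div_rpow_add_le {a b x : ℝ} (ha : 0 < a) (hab : a ≤ b) (hx : 0 ≤ x) :
    (1 + x / b) ^ (b + x) ≤ (1 + x / a) ^ (a + x) := by
  have hb : 0 < b := ha.trans_le hab
  rw [rpow_def_of_pos (by positivity), rpow_def_of_pos (by positivity), exp_le_exp,
    mul_comm, mul_comm (log _)]
  exact add_mul_log_one_add_div_le ha hab hx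

/-- The function `f(x) = (1 + x/4)^{4+x} / (1 + x/3)^{3+x}` satisfies `f(x) ≤ 1` for `x ≥ 0`. -/
theorem f_le_one (x : ℝ) (hx : 0 ≤ x) :
    (1 + x/4) ^ (4 + x) / (1 + x/3) ^ (3 + x) ≤ 1 :=
  (div_le_one (by positivity)).2 (one_add_div_rpow_add_le (by norm_num) (by norm_num) hx)
end
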